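/- arXiv:1411.2066 — 2 statements merged into one kernel-verified Lean document; each statement's English description precedes it below -/
import Mathlib

section
/- Let M be a bounded, self-adjoint, positive operator on a Hilbert space K, let λ > 0, s ≥ 0, a ≥ 0 with s + a > 0, and suppose f ∈ K lies in the range of M^s, i.e. f = M^s g. Then ‖M^a((M+λI)⁻¹ M f − f)‖ ≤ max(1, ‖M‖^{s+a−1}) · λ^{min(1, s+a)} · ‖g‖. -/
/-!
Since `M ≥ 0` and `B (M + λ) = 1`, `B` is the functional calculus of `(t + λ)⁻¹` and
`B M - 1 = -λ B`, so `M^a (B M - 1) M^s` is the functional calculus of `-λ t^(s+a) / (t + λ)`.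
Its norm is the supremum of that function over `σ(M) ⊆ [0, ‖M‖]`, which is at most
`‖M‖^(s+a-1) λ` when `s + a ≥ 1` (as `t / (t + λ) ≤ 1`) and at most `λ^(s+a)` when
`s + a ≤ 1` (weighted AM-GM).
-/

section Scalar

variable {lam r t N : ℝ}

lemma mul_rpow_div_add_le_of_one_le (hlam : 0 < lam) (hr : 1 ≤ r) (ht : 0 ≤ t) (htN : t ≤ N) :
    lam * t ^ r / (t + lam) ≤ N ^ (r - 1) * lam := by
  have hpos : 0 < t + lam := by linarith
  have hsplit : t ^ r = t ^ (r - 1) * t := by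
    rw [← Real.rpow_add_one' ht (by linarith), sub_add_cancel]
  have hfrac : lam * t / (t + lam) ≤ lam := by
    rw [div_le_iff₀ hpos]; nlinarith
  calc lam * t ^ r / (t + lam) = t ^ (r - 1) * (lam * t / (t + lam)) := by
        rw [hsplit]; ring
    _ ≤ N ^ (r - 1) * lam :=
        mul_le_mul (Real.rpow_le_rpow ht htN (by linarith)) hfrac (by positivity)
          (Real.rpow_nonneg (ht.trans htN) _)

lemma mul_rpow_div_add_le_of_le_one (hlam : 0 < lam) (hr0 : 0 ≤ r) (hr1 : r ≤ 1) (ht : 0 ≤ t) :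
    lam * t ^ r / (t + lam) ≤ lam ^ r := by
  have hpos : 0 < t + lam := by linarith
  -- weighted AM-GM: `λ^(1-r) t^r ≤ (1-r) λ + r t ≤ λ + t`
  have hamgm : lam ^ (1 - r) * t ^ r ≤ t + lam := by
    have := Real.geom_mean_le_arith_mean2_weighted (by linarith) hr0 hlam.le ht
      (sub_add_cancel 1 r)
    nlinarith
  calc lam * t ^ r / (t + lam) = lam ^ r * (lam ^ (1 - r) * t ^ r) / (t + lam) := by
        rw [← mul_assoc, ← Real.rpow_add hlam, add_sub_cancel, Real.rpow_one]
    _ ≤ lam ^ r := by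
        rw [div_le_iff₀ hpos]; gcongr

lemma mul_rpow_div_add_le (hlam : 0 < lam) (hr : 0 ≤ r) (ht : 0 ≤ t) (htN : t ≤ N) :
    lam * t ^ r / (t + lam) ≤ max 1 (N ^ (r - 1)) * lam ^ min 1 r := by
  rcases le_total 1 r with h | h
  · rw [min_eq_left h, Real.rpow_one]
    exact (mul_rpow_div_add_le_of_one_le hlam h ht htN).trans
      (mul_le_mul_of_nonneg_right (le_max_right _ _) hlam.le)
  · rw [min_eq_right h]
    exact (mul_rpow_div_add_le_of_le_one hlam hr h ht).trans
      (le_mul_of_one_le_left (by positivity) (le_max_left _ _))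

end Scalar

section CStarAlgebra

variable {A : Type*} [CStarAlgebra A] [PartialOrder A] [StarOrderedRing A] {M B : A} {lam : ℝ}

lemma add_ne_zero_of_mem_spectrum (hM : 0 ≤ M) (hlam : 0 < lam) {t : ℝ} (ht : t ∈ spectrum ℝ M) :
    t + lam ≠ 0 :=
  (add_pos_of_nonneg_of_pos (spectrum_nonneg_of_nonneg hM ht) hlam).ne'

lemma continuousOn_inv_add_spectrum (hM : 0 ≤ M) (hlam : 0 < lam) :
    ContinuousOn (fun t : ℝ => (t + lam)⁻¹) (spectrum ℝ M) :=
  ContinuousOn.inv₀ (by fun_prop) fun _ => add_ne_zero_of_mem_spectrum hM hlam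

lemma eq_cfc_inv_add_of_mul_eq_one (hM : 0 ≤ M) (hlam : 0 < lam) (hB : B * (M + lam • 1) = 1) :
    B = cfc (fun t : ℝ => (t + lam)⁻¹) M := by
  have hshift : M + lam • 1 = cfc (fun t : ℝ => t + lam) M := by
    rw [cfc_add .., cfc_id' ℝ M, cfc_const lam M, Algebra.algebraMap_eq_smul_one]
  have hinv : (M + lam • 1) * cfc (fun t : ℝ => (t + lam)⁻¹) M = 1 := by
    rw [hshift, ← cfc_mul (fun t : ℝ => t + lam) _ M (by fun_prop)
      (continuousOn_inv_add_spectrum hM hlam), ← cfc_one ℝ M]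
    exact cfc_congr fun t ht => mul_inv_cancel₀ (add_ne_zero_of_mem_spectrum hM hlam ht)
  calc B = B * ((M + lam • 1) * cfc (fun t : ℝ => (t + lam)⁻¹) M) := by rw [hinv, mul_one]
    _ = _ := by rw [← mul_assoc, hB, one_mul]

lemma mul_sub_one_eq_cfc (hM : 0 ≤ M) (hlam : 0 < lam) (hB : B * (M + lam • 1) = 1) :
    B * M - 1 = cfc (fun t : ℝ => -(lam * (t + lam)⁻¹)) M := by
  rw [cfc_neg, cfc_const_mul _ _ _ (continuousOn_inv_add_spectrum hM hlam),
    ← eq_cfc_inv_add_of_mul_eq_one hM hlam hB, ← hB, mul_add, mul_smul_comm, mul_one]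
  abel

lemma norm_cfc_rpow_mul_mul_sub_one_mul_cfc_rpow_le (hM : 0 ≤ M) (hlam : 0 < lam) {s a : ℝ}
    (hs : 0 ≤ s) (ha : 0 ≤ a) (hB : B * (M + lam • 1) = 1) :
    ‖cfc (fun t : ℝ => t ^ a) M * (B * M - 1) * cfc (fun t : ℝ => t ^ s) M‖ ≤
      max 1 (‖M‖ ^ (s + a - 1)) * lam ^ min 1 (s + a) := by
  have hcont : ∀ {r : ℝ}, 0 ≤ r → ContinuousOn (fun t : ℝ => t ^ r) (spectrum ℝ M) :=
    fun hr => (Real.continuous_rpow_const hr).continuousOn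
  have hresolvent : ContinuousOn (fun t : ℝ => -(lam * (t + lam)⁻¹)) (spectrum ℝ M) :=
    (continuousOn_const.mul (continuousOn_inv_add_spectrum hM hlam)).neg
  rw [mul_sub_one_eq_cfc hM hlam hB, ← cfc_mul _ _ M (hcont ha) hresolvent,
    ← cfc_mul (fun t : ℝ => t ^ a * -(lam * (t + lam)⁻¹)) _ M ((hcont ha).mul hresolvent) (hcont hs)]
  refine norm_cfc_le (by positivity) fun t ht => ?_
  have ht0 : 0 ≤ t := spectrum_nonneg_of_nonneg hM ht
  have htM : t ≤ ‖M‖ :=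
    (le_algebraMap_iff_spectrum_le (a := M)).mp IsSelfAdjoint.le_algebraMap_norm_self t ht
  calc ‖t ^ a * -(lam * (t + lam)⁻¹) * t ^ s‖ = lam * t ^ (s + a) / (t + lam) := by
        rw [Real.rpow_add_of_nonneg ht0 hs ha, mul_neg, neg_mul, norm_neg,
          Real.norm_of_nonneg (by positivity)]
        ring
    _ ≤ _ := mul_rpow_div_add_le hlam (add_nonneg hs ha) ht0 htM

end CStarAlgebra

theorem stmt3_general {K : Type*} [NormedAddCommGroup K] [InnerProductSpace ℂ K] [CompleteSpace K]
    (M B : K →L[ℂ] K) (lam s a : ℝ) (hlam : 0 < lam) (hs : 0 ≤ s) (ha : 0 ≤ a)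
    (hM : M.IsPositive)
    (hB2 : B ∘L (M + lam • 1) = 1)
    (f g : K) (hf : f = cfc (fun t : ℝ => t ^ s) M g) :
    ‖cfc (fun t : ℝ => t ^ a) M (B (M f) - f)‖ ≤
      max 1 (‖M‖ ^ (s + a - 1)) * lam ^ min 1 (s + a) * ‖g‖ := by
  calc ‖cfc (fun t : ℝ => t ^ a) M (B (M f) - f)‖
      = ‖(cfc (fun t : ℝ => t ^ a) M * (B * M - 1) * cfc (fun t : ℝ => t ^ s) M) g‖ := by
        rw [hf]; rfl
    _ ≤ _ := (ContinuousLinearMap.le_opNorm _ g).trans <| mul_le_mul_of_nonneg_right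
        (norm_cfc_rpow_mul_mul_sub_one_mul_cfc_rpow_le (M.nonneg_iff_isPositive.mpr hM) hlam hs
          ha hB2) (norm_nonneg g)

/-- Spectral bound on regularized inverses: for a compact positive self-adjoint
operator `M`, `λ > 0`, `s, a ≥ 0` with `s + a > 0`, `B` the inverse of `M + λI`,
and `f = M^s g` (via the continuous functional calculus), we have
`‖M^a((M+λI)⁻¹ M f − f)‖ ≤ max(1, ‖M‖^{s+a−1}) λ^{min(1, s+a)} ‖g‖`. -/
theorem stmt3 {K : Type*} [NormedAddCommGroup K] [InnerProductSpace ℂ K] [CompleteSpace K]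
    (M B : K →L[ℂ] K) (lam s a : ℝ) (hlam : 0 < lam) (hs : 0 ≤ s) (ha : 0 ≤ a)
    (hsa : 0 < s + a) (hM : M.IsPositive) (hcpt : IsCompactOperator M)
    (hB1 : (M + lam • 1) ∘L B = 1) (hB2 : B ∘L (M + lam • 1) = 1)
    (f g : K) (hf : f = cfc (fun t : ℝ => t ^ s) M g) :
    ‖cfc (fun t : ℝ => t ^ a) M (B (M f) - f)‖ ≤
      max 1 (‖M‖ ^ (s + a - 1)) * lam ^ min 1 (s + a) * ‖g‖ :=
  stmt3_general M B lam s a hlam hs ha hM hB2 f g hf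
end

section
/- Let T, T_x be bounded positive self-adjoint operators on a Hilbert space 𝓗 and λ > 0. If ‖(T − T_x)(T + λI)⁻¹‖_{op} ≤ 1/2, then ‖(T + λI)^{1/2} (T_x + λI)⁻¹ (T + λI)^{1/2}‖_{op} ≤ 2. -/
/-!
Put `a = T + λ` and `e = T - Tₓ`, so that `Tₓ + λ = a - e`, and let `s = r⁻¹` for the square root
`r` of `a`. Then `r (Tₓ + λ)⁻¹ r` is the inverse of `1 - d` with `d = s e s`, so a Neumann-series
estimate bounds it by `(1 - ‖d‖)⁻¹`. The element `d` is self-adjoint and conjugate to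
`e a⁻¹ = r d r⁻¹`; for self-adjoint elements of a C⋆-ring the norm equals the spectral radius,
which is invariant under conjugation, whence `‖d‖ ≤ ‖e a⁻¹‖ ≤ 1/2`.
-/

open Filter Topology

lemma le_of_forall_pow_two_pow_le_mul {x y C : ℝ} (hy : 0 ≤ y)
    (h : ∀ k : ℕ, x ^ 2 ^ k ≤ C * y ^ 2 ^ k) : x ≤ y := by
  by_contra! hyx
  have hx : 0 < x := hy.trans_lt hyx
  have hlim : Tendsto (fun k : ℕ => C * (y / x) ^ 2 ^ k) atTop (𝓝 0) := by
    simpa using ((tendsto_pow_atTop_nhds_zero_of_lt_one (by positivity)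
      ((div_lt_one hx).2 hyx)).comp (tendsto_pow_atTop_atTop_of_one_lt one_lt_two)).const_mul C
  obtain ⟨k, hk⟩ := (hlim.eventually (gt_mem_nhds one_pos)).exists
  rw [div_pow, ← mul_div_assoc, div_lt_one (pow_pos hx _)] at hk
  exact (h k).not_gt hk

lemma norm_le_of_mul_one_sub_eq_one {A : Type*} [NormedRing A] {m d : A} {c : ℝ}
    (hone : ‖(1 : A)‖ ≤ 1) (hmd : m * (1 - d) = 1) (hd : ‖d‖ ≤ c) (hc : c < 1) :
    ‖m‖ ≤ (1 - c)⁻¹ := by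
  have hm : m = 1 + m * d := by rw [← hmd]; noncomm_ring
  have hmd_le : ‖m * d‖ ≤ ‖m‖ * c :=
    (norm_mul_le m d).trans (mul_le_mul_of_nonneg_left hd (norm_nonneg m))
  have : ‖m‖ ≤ 1 + ‖m‖ * c := by
    calc ‖m‖ = ‖1 + m * d‖ := by rw [← hm]
      _ ≤ ‖(1 : A)‖ + ‖m * d‖ := norm_add_le _ _
      _ ≤ 1 + ‖m‖ * c := add_le_add hone hmd_le
  rw [← one_div, le_div_iff₀ (sub_pos.2 hc)]
  linarith

section CStarRing

variable {A : Type*} [NormedRing A] [StarRing A] [CStarRing A]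

lemma CStarRing.norm_one_le : ‖(1 : A)‖ ≤ 1 := by
  rcases subsingleton_or_nontrivial A with _ | _
  · simp [Subsingleton.elim (1 : A) 0]
  · exact CStarRing.norm_one.le

lemma IsSelfAdjoint.norm_le_norm_of_eq_conj {a b : A} (ha : IsSelfAdjoint a) (u : Aˣ)
    (hab : a = u * b * ↑u⁻¹) : ‖a‖ ≤ ‖b‖ := by
  refine le_of_forall_pow_two_pow_le_mul (C := ‖(u : A)‖ * ‖(↑u⁻¹ : A)‖) (norm_nonneg b) fun k => ?_
  calc ‖a‖ ^ 2 ^ k = ‖a ^ 2 ^ k‖ := (ha.norm_pow_two_pow k).symm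
    _ = ‖u * b ^ 2 ^ k * ↑u⁻¹‖ := by rw [hab, Units.conj_pow]
    _ ≤ ‖(u : A)‖ * ‖b ^ 2 ^ k‖ * ‖(↑u⁻¹ : A)‖ := norm_mul₃_le
    _ ≤ ‖(u : A)‖ * ‖b‖ ^ 2 ^ k * ‖(↑u⁻¹ : A)‖ := by
        gcongr; exact norm_pow_le' b (by positivity)
    _ = ‖(u : A)‖ * ‖(↑u⁻¹ : A)‖ * ‖b‖ ^ 2 ^ k := by ring

theorem norm_sqrt_mul_inv_sub_mul_sqrt_le {r a a' b e : A} {c : ℝ} (hr : IsSelfAdjoint r)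
    (he : IsSelfAdjoint e) (hra : r * r = a) (haa' : a * a' = 1) (ha'a : a' * a = 1)
    (hb : b * (a - e) = 1) (hea : ‖e * a'‖ ≤ c) (hc : c < 1) :
    ‖r * b * r‖ ≤ (1 - c)⁻¹ := by
  have ha'r : a' * r = r * a' := by
    calc a' * r = a' * r * (a * a') := by rw [haa', mul_one]
      _ = (a' * a) * r * a' := by simp only [← hra, mul_assoc]
      _ = r * a' := by rw [ha'a, one_mul]
  obtain ⟨s, hs⟩ : ∃ s, s = r * a' := ⟨_, rfl⟩
  have hrs : r * s = 1 := by rw [hs, ← mul_assoc, hra, haa']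
  have hsr : s * r = 1 := by rw [hs, mul_assoc, ha'r, ← mul_assoc, hra, haa']
  have ha' : a' = s * s := by
    rw [hs, mul_assoc, ← mul_assoc a', ha'r, ← mul_assoc, ← mul_assoc, hra, haa', one_mul]
  let u : Aˣ := ⟨r, s, hrs, hsr⟩
  have hs_sa : IsSelfAdjoint s := by
    calc star s = star s * (r * s) := by rw [hrs, mul_one]
      _ = star (r * s) * s := by rw [star_mul, hr.star_eq, mul_assoc]
      _ = s := by rw [hrs, star_one, one_mul]
  have hd_sa : IsSelfAdjoint (s * e * s) := by
    simpa only [hs_sa.star_eq] using he.conjugate s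
  have hd_conj : s * e * s = ↑u⁻¹ * (e * a') * ↑u⁻¹⁻¹ := by
    change s * e * s = s * (e * a') * r
    simp only [ha', mul_assoc, hsr, mul_one]
  have hd : ‖s * e * s‖ ≤ c := (hd_sa.norm_le_norm_of_eq_conj u⁻¹ hd_conj).trans hea
  have hsas : s * a * s = 1 := by rw [← hra, ← mul_assoc, hsr, one_mul, hrs]
  refine norm_le_of_mul_one_sub_eq_one CStarRing.norm_one_le ?_ hd hc
  calc r * b * r * (1 - s * e * s) = r * b * (r * s) * (a - e) * s := by
        rw [← hsas]; simp only [mul_sub, sub_mul, mul_assoc]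
    _ = r * (b * (a - e)) * s := by rw [hrs, mul_one, mul_assoc r b]
    _ = 1 := by rw [hb, mul_one, hrs]

end CStarRing

theorem stmt16_general {G : Type*} [NormedAddCommGroup G] [InnerProductSpace ℝ G] [CompleteSpace G]
    (T Tx R Binv B'inv : G →L[ℝ] G) (lam : ℝ)
    (hT : T.IsPositive) (hTx : Tx.IsPositive)
    (hR : R.IsPositive) (hR2 : R ∘L R = T + lam • 1)
    (hB' : Binv ∘L (Tx + lam • 1) = 1)
    (hB2 : (T + lam • 1) ∘L B'inv = 1) (hB2' : B'inv ∘L (T + lam • 1) = 1)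
    (hsmall : ‖(T - Tx) ∘L B'inv‖ ≤ 1 / 2) :
    ‖R ∘L Binv ∘L R‖ ≤ 2 := by
  have hb : Binv * ((T + lam • 1) - (T - Tx)) = 1 := by
    rw [show (T + lam • 1) - (T - Tx) = Tx + lam • 1 by abel]
    exact hB'
  have h := norm_sqrt_mul_inv_sub_mul_sqrt_le hR.isSelfAdjoint
    (hT.isSelfAdjoint.sub hTx.isSelfAdjoint) hR2 hB2 hB2' hb hsmall (by norm_num)
  norm_num [mul_assoc] at h
  exact h

/-- If `T, T_x` are bounded positive self-adjoint operators, `λ > 0`, `R` is the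
positive square root of `T + λI`, `Binv` inverts `T_x + λI`, `B'inv` inverts `T + λI`
and `‖(T − T_x)(T + λI)⁻¹‖ ≤ 1/2`, then `‖(T+λI)^{1/2}(T_x+λI)⁻¹(T+λI)^{1/2}‖ ≤ 2`. -/
theorem stmt16 {G : Type*} [NormedAddCommGroup G] [InnerProductSpace ℝ G] [CompleteSpace G]
    (T Tx R Binv B'inv : G →L[ℝ] G) (lam : ℝ) (hlam : 0 < lam)
    (hT : T.IsPositive) (hTx : Tx.IsPositive)
    (hR : R.IsPositive) (hR2 : R ∘L R = T + lam • 1)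
    (hB : (Tx + lam • 1) ∘L Binv = 1) (hB' : Binv ∘L (Tx + lam • 1) = 1)
    (hB2 : (T + lam • 1) ∘L B'inv = 1) (hB2' : B'inv ∘L (T + lam • 1) = 1)
    (hsmall : ‖(T - Tx) ∘L B'inv‖ ≤ 1 / 2) :
    ‖R ∘L Binv ∘L R‖ ≤ 2 :=
  stmt16_general T Tx R Binv B'inv lam hT hTx hR hR2 hB' hB2 hB2' hsmall
end
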